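/- Stationarity of entropy at the β-system solutions: if β′ and β″ both satisfy ∑_{W ∋ j} λ_W(β) = d_j for all j, and S(y) = ∑_{W∈S_r(n)} [ξ_W(y) log(1/ξ_W(y)) + (1−ξ_W(y)) log(1/(1−ξ_W(y)))] with ξ_W(y) = (1−y)λ_W(β′) + y λ_W(β″), then S′(0) = 0 and S′(1) = 0. -/

import Mathlib

/-!
Each summand of `S` is the binary entropy `h` of `ξ_W(y)`, and `h'(p) = log (1 - p) - log p`
inverts the sigmoid: `h'(σ x) = -x`. Since `λ_W(β) = σ (∑_{k ∈ W} β_k)`, at `y = 0` we get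
`S'(0) = -∑_W (λ_W(β') - λ_W(β)) ∑_{k ∈ W} β_k`. Swapping the two sums turns this into
`-∑_k β_k ∑_{W ∋ k} (λ_W(β') - λ_W(β))`, and every inner sum is `d_k - d_k = 0`.
The endpoint `y = 1` is symmetric.
-/

noncomputable def lamW {n : ℕ} (β : Fin n → ℝ) (W : Finset (Fin n)) : ℝ :=
  Real.exp (∑ k ∈ W, β k) / (1 + Real.exp (∑ k ∈ W, β k))

open Real Finset

lemma lamW_eq_sigmoid {n : ℕ} (β : Fin n → ℝ) (W : Finset (Fin n)) :
    lamW β W = sigmoid (∑ k ∈ W, β k) := by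
  rw [lamW, sigmoid_def, exp_neg]
  field_simp
  ring

lemma log_one_sub_sigmoid_sub_log_sigmoid (x : ℝ) :
    log (1 - sigmoid x) - log (sigmoid x) = -x := by
  rw [← sigmoid_neg, ← sigmoid_mul_rexp_neg, log_mul (sigmoid_pos x).ne' (exp_pos _).ne',
    log_exp]
  ring

lemma hasDerivAt_binEntropy_affine {a b y₀ : ℝ} (h₀ : (1 - y₀) * a + y₀ * b ≠ 0)
    (h₁ : (1 - y₀) * a + y₀ * b ≠ 1) :
    HasDerivAt (fun y => binEntropy ((1 - y) * a + y * b))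
      ((log (1 - ((1 - y₀) * a + y₀ * b)) - log ((1 - y₀) * a + y₀ * b)) * (b - a)) y₀ := by
  have hξ : HasDerivAt (fun y => (1 - y) * a + y * b) (b - a) y₀ := by
    refine ((((hasDerivAt_id' y₀).const_sub 1).mul_const a).fun_add
      ((hasDerivAt_id' y₀).mul_const b)).congr_deriv ?_
    ring
  exact (hasDerivAt_binEntropy h₀ h₁).comp y₀ hξ

lemma sum_sub_mul_sum_eq_zero {ι : Type*} [Fintype ι] [DecidableEq ι] {P : Finset (Finset ι)}
    {μ ν : Finset ι → ℝ} (hμν : ∀ j, ∑ W ∈ P with j ∈ W, μ W = ∑ W ∈ P with j ∈ W, ν W)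
    (γ : ι → ℝ) :
    ∑ W ∈ P, (ν W - μ W) * ∑ k ∈ W, γ k = 0 := by
  calc ∑ W ∈ P, (ν W - μ W) * ∑ k ∈ W, γ k
      = ∑ k, ∑ W ∈ P with k ∈ W, (ν W - μ W) * γ k := by
        simp_rw [mul_sum]
        exact sum_comm' fun W k => by simp
    _ = 0 := by
        refine sum_eq_zero fun k _ => ?_
        rw [← sum_mul, sum_sub_distrib, hμν k, sub_self, zero_mul]

lemma hasDerivAt_sum_binEntropy_eq_zero {ι : Type*} [Fintype ι] [DecidableEq ι]
    {P : Finset (Finset ι)} {μ ν : Finset ι → ℝ}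
    (hμν : ∀ j, ∑ W ∈ P with j ∈ W, μ W = ∑ W ∈ P with j ∈ W, ν W)
    {y₀ : ℝ} (γ : ι → ℝ) (hγ : ∀ W ∈ P, (1 - y₀) * μ W + y₀ * ν W = sigmoid (∑ k ∈ W, γ k)) :
    HasDerivAt (fun y => ∑ W ∈ P, binEntropy ((1 - y) * μ W + y * ν W)) 0 y₀ := by
  have hterm : ∀ W ∈ P, HasDerivAt (fun y => binEntropy ((1 - y) * μ W + y * ν W))
      ((ν W - μ W) * ∑ k ∈ W, -γ k) y₀ := by
    intro W hW
    have h₀ := (sigmoid_pos (∑ k ∈ W, γ k)).ne'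
    have h₁ := (sigmoid_lt_one (∑ k ∈ W, γ k)).ne
    rw [← hγ W hW] at h₀ h₁
    convert hasDerivAt_binEntropy_affine h₀ h₁ using 1
    rw [hγ W hW, log_one_sub_sigmoid_sub_log_sigmoid, sum_neg_distrib, mul_comm]
  simpa only [sum_sub_mul_sum_eq_zero hμν] using HasDerivAt.fun_sum hterm

theorem stmt14_general (n r : ℕ) (d : Fin n → ℝ)
    (β β' : Fin n → ℝ)
    (h : ∀ j : Fin n,
      ∑ W ∈ (Finset.powersetCard r (Finset.univ : Finset (Fin n))).filter (fun W => j ∈ W),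
        lamW β W = d j)
    (h' : ∀ j : Fin n,
      ∑ W ∈ (Finset.powersetCard r (Finset.univ : Finset (Fin n))).filter (fun W => j ∈ W),
        lamW β' W = d j) :
    HasDerivAt (fun y : ℝ =>
      ∑ W ∈ Finset.powersetCard r (Finset.univ : Finset (Fin n)),
        (((1 - y) * lamW β W + y * lamW β' W) * Real.log (1 / ((1 - y) * lamW β W + y * lamW β' W)) +
          (1 - ((1 - y) * lamW β W + y * lamW β' W)) *
            Real.log (1 / (1 - ((1 - y) * lamW β W + y * lamW β' W))))) 0 0 ∧
    HasDerivAt (fun y : ℝ =>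
      ∑ W ∈ Finset.powersetCard r (Finset.univ : Finset (Fin n)),
        (((1 - y) * lamW β W + y * lamW β' W) * Real.log (1 / ((1 - y) * lamW β W + y * lamW β' W)) +
          (1 - ((1 - y) * lamW β W + y * lamW β' W)) *
            Real.log (1 / (1 - ((1 - y) * lamW β W + y * lamW β' W))))) 0 1 := by
  have hdeg j := (h j).trans (h' j).symm
  simp only [one_div]
  exact ⟨hasDerivAt_sum_binEntropy_eq_zero hdeg β fun W _ => by simp [lamW_eq_sigmoid],
    hasDerivAt_sum_binEntropy_eq_zero hdeg β' fun W _ => by simp [lamW_eq_sigmoid]⟩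

theorem stmt14 (n r : ℕ) (hr : 1 ≤ r) (hrn : r ≤ n) (d : Fin n → ℝ)
    (β β' : Fin n → ℝ)
    (h : ∀ j : Fin n,
      ∑ W ∈ (Finset.powersetCard r (Finset.univ : Finset (Fin n))).filter (fun W => j ∈ W),
        lamW β W = d j)
    (h' : ∀ j : Fin n,
      ∑ W ∈ (Finset.powersetCard r (Finset.univ : Finset (Fin n))).filter (fun W => j ∈ W),
        lamW β' W = d j) :
    HasDerivAt (fun y : ℝ =>
      ∑ W ∈ Finset.powersetCard r (Finset.univ : Finset (Fin n)),
        (((1 - y) * lamW β W + y * lamW β' W) * Real.log (1 / ((1 - y) * lamW β W + y * lamW β' W)) +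
          (1 - ((1 - y) * lamW β W + y * lamW β' W)) *
            Real.log (1 / (1 - ((1 - y) * lamW β W + y * lamW β' W))))) 0 0 ∧
    HasDerivAt (fun y : ℝ =>
      ∑ W ∈ Finset.powersetCard r (Finset.univ : Finset (Fin n)),
        (((1 - y) * lamW β W + y * lamW β' W) * Real.log (1 / ((1 - y) * lamW β W + y * lamW β' W)) +
          (1 - ((1 - y) * lamW β W + y * lamW β' W)) *
            Real.log (1 / (1 - ((1 - y) * lamW β W + y * lamW β' W))))) 0 1 :=
  stmt14_general n r d β β' h h'
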